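/- Let (p0,p1,p2) in [0,1)^3 be self-dual. Then the full joint distribution of the three connectivity indicators (A↔B, B↔C, C↔A) is the same for the triangle (edge probabilities p0 on BC, p1 on CA, p2 on AB) and for the star (edge probabilities 1-p0 on OA, 1-p1 on OB, 1-p2 on OC). That is, for every event determined by which pairs among A, B, C are connected, the two probabilities agree. -/

import Mathlib

/-- Bernoulli edge weight: probability `p` if the edge is open, `1-p` if closed. -/
def edgeWeight (p : ℝ) (x : Bool) : ℝ := if x then p else 1 - p

/-- Probability, under independent edges with parameters `p0, p1, p2`, of the
event `E` of the three edge states. -/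
def probOf (p0 p1 p2 : ℝ) (E : Bool → Bool → Bool → Bool) : ℝ :=
  ∑ a : Bool, ∑ b : Bool, ∑ c : Bool,
    (if E a b c then 1 else 0) * edgeWeight p0 a * edgeWeight p1 b * edgeWeight p2 c

/-- Triangle on `{A,B,C}`, edges `a = BC, b = CA, c = AB`: `A ↔ B`. -/
def triAB (a b c : Bool) : Bool := c || (a && b)
def triBC (a b c : Bool) : Bool := a || (b && c)
def triCA (a b c : Bool) : Bool := b || (a && c)

/-- Star on `{A,B,C,O}`, edges `a = OA, b = OB, c = OC`: `A ↔ B`. -/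
def starAB (a b _c : Bool) : Bool := a && b
def starBC (_a b c : Bool) : Bool := b && c
def starCA (a _b c : Bool) : Bool := a && c

/-! Both connectivity patterns are functions of the edge states, so it suffices to compare their
laws. In both models no pattern has exactly two connected pairs, and "only `X ↔ Y`" has the same
probability `(1-pᵢ)(1-pⱼ)pₖ`, `pₖ` being the parameter of the triangle edge `XY`. The triangle is
disconnected, and the star fully connected, with the same probability `c = (1-p0)(1-p1)(1-p2)`;
so "all connected" and "none connected" have probabilities `(1-S-c, c)` in the triangle and
`(c, 1-S-c)` in the star, `S` being the total single-pair mass, and `1-S-2c = κ_tri(p0,p1,p2)`. -/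

theorem probOf_comp_eq_sum {α : Type*} [Fintype α] [DecidableEq α] (p0 p1 p2 : ℝ)
    (g : Bool → Bool → Bool → α) (f : α → Bool) :
    probOf p0 p1 p2 (fun a b c => f (g a b c))
      = ∑ v, (if f v then (1 : ℝ) else 0) * probOf p0 p1 p2 (fun a b c => g a b c = v) := by
  simp only [probOf, Finset.mul_sum]
  refine (Finset.sum_comm.trans (Fintype.sum_congr _ _ fun a => ?_)).symm
  refine Finset.sum_comm.trans (Fintype.sum_congr _ _ fun b => ?_)
  refine Finset.sum_comm.trans (Fintype.sum_congr _ _ fun c => ?_)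
  simp [← mul_assoc]

theorem probOf_comp_eq_of_forall_probOf_eq {α : Type*} [Fintype α] [DecidableEq α]
    {p0 p1 p2 q0 q1 q2 : ℝ} {g h : Bool → Bool → Bool → α}
    (hgh : ∀ v, probOf p0 p1 p2 (fun a b c => g a b c = v)
      = probOf q0 q1 q2 (fun a b c => h a b c = v))
    (f : α → Bool) :
    probOf p0 p1 p2 (fun a b c => f (g a b c)) = probOf q0 q1 q2 (fun a b c => f (h a b c)) := by
  simp only [probOf_comp_eq_sum, hgh]

def triPattern (a b c : Bool) : Bool × Bool × Bool := (triAB a b c, triBC a b c, triCA a b c)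

def starPattern (a b c : Bool) : Bool × Bool × Bool := (starAB a b c, starBC a b c, starCA a b c)

theorem probOf_triPattern_eq_probOf_starPattern {p0 p1 p2 : ℝ}
    (hsd : p0 + p1 + p2 - p0 * p1 * p2 - 1 = 0) (v : Bool × Bool × Bool) :
    probOf p0 p1 p2 (fun a b c => triPattern a b c = v)
      = probOf (1 - p0) (1 - p1) (1 - p2) (fun a b c => starPattern a b c = v) := by
  obtain ⟨AB, BC, CA⟩ := v
  cases AB <;> cases BC <;> cases CA <;>
    simp [probOf, edgeWeight, triPattern, starPattern, triAB, triBC, triCA, starAB, starBC, starCA]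
  case false.false.false => linear_combination -hsd
  case true.true.true => linear_combination hsd

theorem star_triangle_joint_law_general (p0 p1 p2 : ℝ)
    (hsd : p0 + p1 + p2 - p0 * p1 * p2 - 1 = 0)
    (f : Bool → Bool → Bool → Bool) :
    probOf p0 p1 p2 (fun a b c => f (triAB a b c) (triBC a b c) (triCA a b c))
      = probOf (1 - p0) (1 - p1) (1 - p2)
          (fun a b c => f (starAB a b c) (starBC a b c) (starCA a b c)) := by
  exact probOf_comp_eq_of_forall_probOf_eq (probOf_triPattern_eq_probOf_starPattern hsd)
    (fun v => f v.1 v.2.1 v.2.2)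

/-- Under self-duality, the joint law of the connectivity indicators
`(A↔B, B↔C, C↔A)` is the same for the triangle (edge probabilities `p0,p1,p2`)
and for the star (edge probabilities `1-p0,1-p1,1-p2`): every event determined
by the connectivity pattern of `A,B,C` has equal probability in the two models. -/
theorem star_triangle_joint_law (p0 p1 p2 : ℝ)
    (h0 : p0 ∈ Set.Ico (0:ℝ) 1) (h1 : p1 ∈ Set.Ico (0:ℝ) 1)
    (h2 : p2 ∈ Set.Ico (0:ℝ) 1)
    (hsd : p0 + p1 + p2 - p0 * p1 * p2 - 1 = 0)
    (f : Bool → Bool → Bool → Bool) :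
    probOf p0 p1 p2 (fun a b c => f (triAB a b c) (triBC a b c) (triCA a b c))
      = probOf (1 - p0) (1 - p1) (1 - p2)
          (fun a b c => f (starAB a b c) (starBC a b c) (starCA a b c)) :=
  star_triangle_joint_law_general p0 p1 p2 hsd f
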